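/- Let A be a unital C*-algebra and let (q_n)_{n≥0} be self-adjoint elements of A such that for every t ∈ [0,1] the family (tⁿ·q_n)_{n≥0} is summable in norm, with sum G(t) = Σ_{n≥0} tⁿ q_n. Assume that 0 ≤ G(t) ≤ 1 for every t ∈ [0,1] and that G(s)² − 2·G(s)·G(t) + G(t)² = (s−t)²·1 for all s, t ∈ [0,1]. Then there exists a self-adjoint projection P ∈ A such that q₀ = 1 − P, q₁ = 2P − 1, and q_n = 0 for all n ≥ 2; consequently G(t) = t·P + (1−t)·(1−P) for all t ∈ [0,1], and all the elements q_n commute with one another. -/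

import Mathlib

/-!
Each `G t` is self-adjoint, so comparing the isometry equation with its adjoint shows that the
`G t` commute and `(G s - G t)² = (s - t)²`. For `x = G t - G 0` and `y = G 1 - G t` this gives
`x² = t²`, `y² = (1 - t)²` and `(x + y)² = 1`: equality in the triangle inequality, which in a
C*-algebra forces `(1 - t) x = t y` because `(1 - t) x - t y` is a self-adjoint square-zero
element. Hence `G t = G 0 + t E` with `E = G 1 - G 0` a self-adjoint unitary, and
`P = (1 + E) / 2` is a projection commuting with `G 0`. Compressing `G 0 ≤ 1 - E = 2 (1 - P)` by
`P` and `1 - G 0 ≤ 1 + E = 2 P` by `1 - P` gives `G 0 P = 0` and `(1 - G 0)(1 - P) = 0`, i.e.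
`G 0 = 1 - P`. Finally `∑ tⁿ qₙ = G 0 + t E` on `[0, 1]`, and by the identity theorem for the
real-analytic function `∑ tⁿ qₙ` the coefficients are those of this affine function.
-/

open Filter Topology Set

theorem IsSelfAdjoint.tsum {ι A : Type*} [AddCommMonoid A] [TopologicalSpace A] [StarAddMonoid A]
    [ContinuousStar A] [T2Space A] {f : ι → A} (hf : ∀ i, IsSelfAdjoint (f i)) :
    IsSelfAdjoint (∑' i, f i) := by
  simp only [IsSelfAdjoint, tsum_star, (hf _).star_eq]

theorem IsSelfAdjoint.commute_of_sq_sub_two_nsmul_mul_add_sq {A : Type*} [Ring A] [StarRing A]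
    [Module ℝ A] {x y z : A} (hx : IsSelfAdjoint x) (hy : IsSelfAdjoint y) (hz : IsSelfAdjoint z)
    (h : x ^ 2 - 2 • (x * y) + y ^ 2 = z) : Commute x y := by
  have h' : x ^ 2 - 2 • (y * x) + y ^ 2 = z := by
    simpa only [star_add, star_sub, star_pow, star_nsmul, star_mul, hx.star_eq, hy.star_eq,
      hz.star_eq] using congrArg star h
  have : (2 : ℝ) • (x * y) = (2 : ℝ) • (y * x) := by
    rw [two_smul, two_smul, ← two_nsmul, ← two_nsmul]
    exact sub_right_injective (add_right_cancel (h.trans h'.symm))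
  exact smul_right_injective A two_ne_zero this

theorem IsSelfAdjoint.smul_eq_smul_of_sq_add {A : Type*} [NormedRing A] [StarRing A] [CStarRing A]
    [Algebra ℝ A] [StarModule ℝ A] {x y : A} {α β : ℝ} (hx : IsSelfAdjoint x)
    (hy : IsSelfAdjoint y) (hx2 : x ^ 2 = α ^ 2 • (1 : A)) (hy2 : y ^ 2 = β ^ 2 • (1 : A))
    (hxy2 : (x + y) ^ 2 = (α + β) ^ 2 • (1 : A)) : β • x = α • y := by
  have hcross : x * y + y * x = (2 * α * β) • (1 : A) := by
    have : (x + y) ^ 2 = x ^ 2 + (x * y + y * x) + y ^ 2 := by noncomm_ring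
    rw [this, hx2, hy2] at hxy2
    rw [← sub_eq_zero, ← sub_eq_zero.2 hxy2]
    module
  set z := β • x - α • y
  have hz : IsSelfAdjoint z :=
    ((IsSelfAdjoint.all β).smul hx).sub ((IsSelfAdjoint.all α).smul hy)
  have hzz : star z * z = 0 := by
    have : z * z = β ^ 2 • x ^ 2 - (α * β) • (x * y + y * x) + α ^ 2 • y ^ 2 := by
      simp only [z, sub_mul, mul_sub, smul_mul_smul_comm, sq]
      module
    rw [hz.star_eq, this, hx2, hy2, hcross]
    module
  exact sub_eq_zero.1 (CStarRing.star_mul_self_eq_zero_iff z |>.1 hzz)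

theorem eq_add_smul_sub_of_sq_sub_eq {A : Type*} [NormedRing A] [StarRing A] [CStarRing A]
    [Algebra ℝ A] [StarModule ℝ A] {G : ℝ → A}
    (hsa : ∀ t ∈ Icc (0 : ℝ) 1, IsSelfAdjoint (G t))
    (hsq : ∀ s ∈ Icc (0 : ℝ) 1, ∀ t ∈ Icc (0 : ℝ) 1, (G s - G t) ^ 2 = (s - t) ^ 2 • (1 : A))
    {t : ℝ} (ht : t ∈ Icc 0 1) : G t = G 0 + t • (G 1 - G 0) := by
  have h0 : (0 : ℝ) ∈ Icc 0 1 := left_mem_Icc.2 zero_le_one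
  have h1 : (1 : ℝ) ∈ Icc 0 1 := right_mem_Icc.2 zero_le_one
  have key : (1 - t) • (G t - G 0) = t • (G 1 - G t) :=
    ((hsa t ht).sub (hsa 0 h0)).smul_eq_smul_of_sq_add ((hsa 1 h1).sub (hsa t ht))
      (by simpa using hsq t ht 0 h0) (hsq 1 h1 t ht) (by simpa using hsq 1 h1 0 h0)
  rw [← sub_eq_zero, ← sub_eq_zero.2 key]
  module

theorem IsSelfAdjoint.isStarProjection_inv_two_smul_one_add {A : Type*} [Ring A] [StarRing A]
    [Algebra ℝ A] [StarModule ℝ A] {u : A} (hu : IsSelfAdjoint u) (hu2 : u ^ 2 = 1) :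
    IsStarProjection ((2⁻¹ : ℝ) • (1 + u)) where
  isSelfAdjoint := (IsSelfAdjoint.all _).smul ((IsSelfAdjoint.one A).add hu)
  isIdempotentElem := by
    have hu2' : u * u = 1 := by rw [← sq, hu2]
    simp only [IsIdempotentElem, smul_mul_smul_comm, add_mul, mul_add, mul_one, one_mul, hu2']
    module

section StarOrderedRing

variable {A : Type*} [Ring A] [StarRing A] [PartialOrder A] [StarOrderedRing A] {p x : A}

theorem IsStarProjection.mul_eq_zero_of_le_nsmul_one_sub (hp : IsStarProjection p)
    (hxp : Commute x p) (hx : 0 ≤ x) {n : ℕ} (hxn : x ≤ n • (1 - p)) : x * p = 0 := by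
  have hpxp : p * x * p = 0 := by
    have hlo := star_left_conjugate_nonneg hx p
    have hhi := star_left_conjugate_le_conjugate hxn p
    rw [hp.isSelfAdjoint.star_eq] at hlo hhi
    rw [mul_smul_comm, smul_mul_assoc, hp.mul_one_sub_self, zero_mul, smul_zero] at hhi
    exact le_antisymm hhi hlo
  rw [← hpxp, ← hxp.eq, mul_assoc, hp.isIdempotentElem.eq]

theorem IsStarProjection.eq_one_sub_of_mem_Icc (hp : IsStarProjection p) (hxp : Commute x p)
    (hx : x ∈ Icc 0 1) (hxu : x + (2 • p - 1) ∈ Icc 0 1) : x = 1 - p := by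
  have hxp0 : x * p = 0 := by
    refine hp.mul_eq_zero_of_le_nsmul_one_sub (n := 2) hxp hx.1 ?_
    rw [show 2 • (1 - p) = 1 - (2 • p - 1) by abel]
    exact le_sub_iff_add_le.2 hxu.2
  have hxq0 : (1 - x) * (1 - p) = 0 := by
    refine hp.one_sub.mul_eq_zero_of_le_nsmul_one_sub (n := 2)
      ((Commute.one_right _).sub_right ((Commute.one_left p).sub_left hxp)) (sub_nonneg.2 hx.2) ?_
    rw [sub_sub_cancel, ← sub_nonneg]
    convert hxu.1 using 1
    abel
  rw [← sub_eq_zero]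
  calc x - (1 - p) = x * p - (1 - x) * (1 - p) := by noncomm_ring
    _ = 0 := by rw [hxp0, hxq0, sub_zero]

end StarOrderedRing

section PowerSeries

variable {E : Type*} [NormedAddCommGroup E] [NormedSpace ℝ E] [CompleteSpace E] {r : ℕ → E}
  {R : ℝ}

theorem eq_zero_of_hasSum_pow_smul_eq_zero (hR : 0 < R)
    (h : ∀ t ∈ Ioo 0 R, HasSum (fun n => t ^ n • r n) 0) : r = 0 := by
  let p : FormalMultilinearSeries ℝ ℝ E := fun n => .mkPiRing ℝ (Fin n) (r n)
  have hp_apply : ∀ n t, p n (fun _ => t) = t ^ n • r n := by simp [p]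
  have hrad : 0 < p.radius := by
    obtain ⟨t, ht⟩ := nonempty_Ioo.2 hR
    lift t to NNReal using ht.1.le
    refine lt_of_lt_of_le (by exact_mod_cast ht.1) (p.le_radius_of_tendsto (l := 0) ?_)
    simpa [p, norm_smul, mul_comm] using (h t ht).summable.tendsto_atTop_zero.norm
  have hf := (p.hasFPowerSeriesOnBall hrad).hasFPowerSeriesAt
  have hsum : ∀ t ∈ Ioo 0 R, p.sum t = 0 := fun t ht => by
    simpa [FormalMultilinearSeries.sum, hp_apply] using (h t ht).tsum_eq
  have hzero : ∃ᶠ t in 𝓝[≠] 0, p.sum t = 0 :=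
    Eventually.frequently (f := 𝓝[>] 0) (mem_of_superset (Ioo_mem_nhdsGT hR) hsum) |>.filter_mono
      (nhdsWithin_mono 0 fun _ ht => ht.ne')
  have := hf.eq_zero_of_eventually (hf.analyticAt.frequently_zero_iff_eventually_zero.1 hzero)
  funext n
  exact (ContinuousMultilinearMap.mkPiRing_eq_zero_iff _).1 (congrFun this n)

theorem coeff_eq_of_hasSum_pow_smul_eq_add_smul {a b : E} (hR : 0 < R)
    (h : ∀ t ∈ Ioo 0 R, HasSum (fun n => t ^ n • r n) (a + t • b)) :
    r 0 = a ∧ r 1 = b ∧ ∀ n, 2 ≤ n → r n = 0 := by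
  set c : ℕ → E := fun n => if n = 0 then a else if n = 1 then b else 0
  have hc : ∀ t : ℝ, HasSum (fun n => t ^ n • c n) (a + t • b) := fun t => by
    have := hasSum_sum_of_ne_finset_zero (f := fun n => t ^ n • c n) (s := Finset.range 2)
      (L := .unconditional ℕ) fun n hn => by
        simp only [Finset.mem_range, not_lt] at hn
        simp [c, show n ≠ 0 by omega, show n ≠ 1 by omega]
    simpa [c, Finset.sum_range_succ] using this
  have hrc : r - c = 0 := eq_zero_of_hasSum_pow_smul_eq_zero hR fun t ht => by
    simpa [smul_sub] using (h t ht).sub (hc t)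
  have hr : ∀ n, r n = c n := fun n => sub_eq_zero.1 (congrFun hrc n)
  exact ⟨hr 0, hr 1, fun n hn => by simp [hr n, c, show n ≠ 0 by omega, show n ≠ 1 by omega]⟩

end PowerSeries

/-- Rigidity of quantum isometric actions on `[0,1]`: if `G(t) = Σ_{n≥0} tⁿ qₙ` with the `qₙ`
self-adjoint, `0 ≤ G(t) ≤ 1` on `[0,1]`, and `G(s)² - 2 G(s)G(t) + G(t)² = (s-t)²·1`, then
there is a self-adjoint projection `P` with `q₀ = 1 - P`, `q₁ = 2P - 1`, `qₙ = 0` for `n ≥ 2`;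
consequently `G(t) = t·P + (1-t)·(1-P)` and all the `qₙ` commute. -/
theorem quantum_isometry_unit_interval_rigidity
    {A : Type*} [CStarAlgebra A] [PartialOrder A] [StarOrderedRing A]
    (q : ℕ → A) (hq : ∀ n, IsSelfAdjoint (q n))
    (hsum : ∀ t ∈ Set.Icc (0 : ℝ) 1, Summable fun n : ℕ => t ^ n • q n)
    (G : ℝ → A) (hG : ∀ t ∈ Set.Icc (0 : ℝ) 1, G t = ∑' n : ℕ, t ^ n • q n)
    (hpos : ∀ t ∈ Set.Icc (0 : ℝ) 1, (0 : A) ≤ G t ∧ G t ≤ 1)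
    (heq : ∀ s ∈ Set.Icc (0 : ℝ) 1, ∀ t ∈ Set.Icc (0 : ℝ) 1,
      G s ^ 2 - 2 • (G s * G t) + G t ^ 2 = ((s - t) ^ 2) • (1 : A)) :
    ∃ P : A, IsSelfAdjoint P ∧ IsIdempotentElem P ∧
      q 0 = 1 - P ∧ q 1 = 2 • P - 1 ∧ (∀ n, 2 ≤ n → q n = 0) ∧
      (∀ t ∈ Set.Icc (0 : ℝ) 1, G t = t • P + (1 - t) • (1 - P)) ∧
      (∀ m n, Commute (q m) (q n)) := by
  have h0 : (0 : ℝ) ∈ Icc 0 1 := left_mem_Icc.2 zero_le_one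
  have h1 : (1 : ℝ) ∈ Icc 0 1 := right_mem_Icc.2 zero_le_one
  have hGsa : ∀ t ∈ Icc (0 : ℝ) 1, IsSelfAdjoint (G t) := fun t ht =>
    hG t ht ▸ IsSelfAdjoint.tsum fun n => (IsSelfAdjoint.all _).smul (hq n)
  have hcomm : ∀ s ∈ Icc (0 : ℝ) 1, ∀ t ∈ Icc (0 : ℝ) 1, Commute (G s) (G t) := fun s hs t ht =>
    (hGsa s hs).commute_of_sq_sub_two_nsmul_mul_add_sq (hGsa t ht)
      ((IsSelfAdjoint.all _).smul (IsSelfAdjoint.one A)) (heq s hs t ht)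
  have hsq : ∀ s ∈ Icc (0 : ℝ) 1, ∀ t ∈ Icc (0 : ℝ) 1, (G s - G t) ^ 2 = (s - t) ^ 2 • (1 : A) :=
    fun s hs t ht => by
      rw [(hcomm s hs t ht).sub_sq, mul_assoc, two_mul, ← two_nsmul, heq s hs t ht]
  set E := G 1 - G 0
  have haff : ∀ t ∈ Icc (0 : ℝ) 1, G t = G 0 + t • E := fun t ht =>
    eq_add_smul_sub_of_sq_sub_eq hGsa hsq ht
  have hE2 : E ^ 2 = 1 := by simpa using hsq 1 h1 0 h0
  set P := (2⁻¹ : ℝ) • (1 + E)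
  have hP : IsStarProjection P :=
    ((hGsa 1 h1).sub (hGsa 0 h0)).isStarProjection_inv_two_smul_one_add hE2
  have hEP : E = 2 • P - 1 := by simp only [P]; module
  obtain ⟨hq0, hq1, hqn⟩ := coeff_eq_of_hasSum_pow_smul_eq_add_smul one_pos fun t ht => by
    have ht' := Ioo_subset_Icc_self ht
    simpa only [← hG t ht', haff t ht'] using (hsum t ht').hasSum
  have hG0 : G 0 = 1 - P := by
    refine hP.eq_one_sub_of_mem_Icc (((Commute.one_right _).add_right
      ((hcomm 0 h0 1 h1).sub_right (Commute.refl _))).smul_right _) (hpos 0 h0) ?_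
    rw [← hEP, show G 0 + E = G 1 from add_sub_cancel _ _]
    exact hpos 1 h1
  have hqP : ∀ n, q n ∈ Algebra.adjoin ℝ {P} := by
    have hPmem := Algebra.self_mem_adjoin_singleton ℝ P
    rintro (_ | _ | n)
    · exact hq0 ▸ hG0 ▸ sub_mem (one_mem _) hPmem
    · exact hq1 ▸ hEP ▸ sub_mem (nsmul_mem hPmem 2) (one_mem _)
    · exact hqn (n + 2) (by omega) ▸ zero_mem _
  refine ⟨P, hP.isSelfAdjoint, hP.isIdempotentElem, hq0.trans hG0, hq1.trans hEP, hqn,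
    fun t ht => ?_, fun m n => ?_⟩
  · rw [haff t ht, hG0, hEP]
    module
  · exact Algebra.commute_of_mem_adjoin_singleton_of_commute (hqP n)
      (Algebra.commute_of_mem_adjoin_self (hqP m)).symm
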